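/- arXiv:2505.12420 — 2 statements merged into one kernel-verified Lean document; each statement's English description precedes it below -/
import Mathlib

section
/- For every integer n ≥ 1, the set of complex numbers z with z ≠ 0 such that (1/2)(z^n + z^(-n)) lies in the real interval [-1,1] is exactly the unit circle {z ∈ ℂ : |z| = 1}. -/
/-- For every integer `n ≥ 1`, the set of nonzero complex numbers `z` such that
`(1/2)(zⁿ + z⁻ⁿ)` lies in the real interval `[-1,1]` is exactly the unit circle. -/
theorem preimage_segment_eq_unit_circle (n : ℕ) (hn : 1 ≤ n) :
    {z : ℂ | z ≠ 0 ∧ ∃ x : ℝ, x ∈ Set.Icc (-1 : ℝ) 1 ∧ (z ^ n + z⁻¹ ^ n) / 2 = (x : ℂ)}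
      = {z : ℂ | ‖z‖ = 1} := by
  ext z
  simp only [Set.mem_setOf_eq, Set.mem_Icc]
  constructor
  · rintro ⟨hz, x, ⟨hx1, hx2⟩, hx⟩
    have hwne : z ^ n ≠ 0 := pow_ne_zero n hz
    have h1 : z ^ n + (z ^ n)⁻¹ = 2 * x := by
      rw [inv_pow] at hx
      linear_combination 2 * hx
    have heq : z ^ n * z ^ n + 1 = 2 * x * z ^ n := by
      field_simp at h1
      linear_combination h1
    set w := z ^ n with hw
    have h2 : (w - x) ^ 2 = (x : ℂ) ^ 2 - 1 := by linear_combination heq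
    set u := w - (x : ℂ) with hu
    have hre : u.re ^ 2 - u.im ^ 2 = x ^ 2 - 1 := by
      have := congrArg Complex.re h2
      simpa [pow_two, Complex.mul_re] using this
    have him : u.re * u.im = 0 := by
      have := congrArg Complex.im h2
      simp [pow_two, Complex.mul_im] at this
      linarith
    have hns : Complex.normSq w = 1 := by
      have hwre : w.re = u.re + x := by simp [hu]
      have hwim : w.im = u.im := by simp [hu]
      rcases mul_eq_zero.1 him with h | h
      · -- u.re = 0
        simp only [Complex.normSq_apply, hwre, hwim, h]
        nlinarith [hre]
      · -- u.im = 0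
        have hx2' : x ^ 2 = 1 := by nlinarith [hre, sq_nonneg u.re]
        have hure : u.re = 0 := by nlinarith [hre]
        simp only [Complex.normSq_apply, hwre, hwim, h, hure]
        nlinarith
    have habs : ‖w‖ = 1 := by
      rw [Complex.norm_def, hns, Real.sqrt_one]
    have hpow : ‖z‖ ^ n = 1 := by
      rw [← norm_pow]; exact habs
    have h0 := norm_nonneg z
    rcases lt_trichotomy ‖z‖ 1 with h | h | h
    · exfalso; have := pow_lt_one₀ h0 h (by omega : n ≠ 0); linarith
    · exact h
    · exfalso; have := one_lt_pow₀ h (by omega : n ≠ 0); linarith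
  · intro hz
    have hzne : z ≠ 0 := by
      intro h; rw [h] at hz; simp at hz
    refine ⟨hzne, (z ^ n).re, ⟨?_, ?_⟩, ?_⟩
    · have := Complex.abs_re_le_norm (z ^ n)
      rw [norm_pow, hz, one_pow] at this
      linarith [abs_le.mp this |>.1]
    · have := Complex.abs_re_le_norm (z ^ n)
      rw [norm_pow, hz, one_pow] at this
      linarith [abs_le.mp this |>.2]
    · have hinv : z⁻¹ = starRingEnd ℂ z := by
        rw [Complex.inv_def]
        have : Complex.normSq z = 1 := by
          have := Complex.sq_norm z; rw [hz] at this; nlinarith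
        simp [this]
      rw [hinv, ← map_pow, Complex.add_conj]
      push_cast
      ring
end

section
/- Let β₁, β₂ be nonconstant rational functions such that β₁⁻¹(E₁) ∩ β₂⁻¹(E₂) ⊆ ℝ ∪ A for some sets E₁, E₂ and a finite set A, and suppose there is a point z₀ ∈ β₁⁻¹(E₁) ∩ β₂⁻¹(E₂) at which the local multiplicity of β₁ is k ≥ 3 and near which β₁⁻¹(E₁) ∩ β₂⁻¹(E₂) contains a topological star with k branches emanating from z₀. Then a contradiction arises: no point of a subset of a line (union a finite set) can have a neighborhood in that subset homeomorphic to a star with 3 or more branches; in particular, a subset of ℝ cannot contain a topological 3-star. -/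
/-- No subset `S` of `ℝ ∪ A ⊆ ℂ` (with `A` finite) can contain a topological star with
`k ≥ 3` branches: there are no `k` arcs (injective continuous maps `[0,1] → ℂ`) starting
at a common point `z₀`, with pairwise intersection of their images exactly `{z₀}`, all
contained in `S`. In particular, a subset of `ℝ` cannot contain a topological 3-star,
which yields the contradiction in the proof of Theorem 1 for a point of local
multiplicity `k ≥ 3` of `β₁` on `β₁⁻¹(E₁) ∩ β₂⁻¹(E₂) ⊆ ℝ ∪ A`. -/
theorem no_star_in_line_union_finite (S A : Set ℂ) (hA : A.Finite)
    (hS : S ⊆ Set.range (Complex.ofReal) ∪ A)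
    (k : ℕ) (hk : 3 ≤ k) (z₀ : ℂ)
    (γ : Fin k → Set.Icc (0 : ℝ) 1 → ℂ)
    (hcont : ∀ i, Continuous (γ i))
    (hinj : ∀ i, Function.Injective (γ i))
    (hstart : ∀ i, γ i ⟨0, by norm_num⟩ = z₀)
    (hrange : ∀ i, Set.range (γ i) ⊆ S)
    (hpair : ∀ i j, i ≠ j → Set.range (γ i) ∩ Set.range (γ j) = {z₀}) :
    False := by
  -- all values are real
  have hline : ∀ i t, (γ i t).im = 0 := by
    intro i t
    by_contra h
    have hop : IsOpen {s : Set.Icc (0:ℝ) 1 | (γ i s).im ≠ 0} :=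
      isOpen_ne.preimage (Complex.continuous_im.comp (hcont i))
    have hinf : {s : Set.Icc (0:ℝ) 1 | (γ i s).im ≠ 0}.Infinite :=
      infinite_of_mem_nhds t (hop.mem_nhds h)
    have hsub : γ i '' {s | (γ i s).im ≠ 0} ⊆ A := by
      rintro z ⟨s, hs, rfl⟩
      rcases hS (hrange i ⟨s, rfl⟩) with hz | hz
      · rcases hz with ⟨r, hr⟩
        exact absurd (by rw [← hr]; simp) hs
      · exact hz
    exact (hinf.image ((hinj i).injOn)) (hA.subset hsub)
  set t0 : Set.Icc (0:ℝ) 1 := ⟨0, by norm_num⟩ with ht0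
  set t1 : Set.Icc (0:ℝ) 1 := ⟨1, by norm_num⟩ with ht1
  set x₀ := z₀.re with hx₀
  set f : Fin k → Set.Icc (0:ℝ) 1 → ℝ := fun i t => (γ i t).re with hf
  have hreal : ∀ i t, γ i t = Complex.ofReal (f i t) := by
    intro i t
    apply Complex.ext <;> simp [hf, hline i t]
  have hfc : ∀ i, Continuous (f i) := fun i => Complex.continuous_re.comp (hcont i)
  have hf0 : ∀ i, f i t0 = x₀ := by
    intro i; show (γ i t0).re = z₀.re; rw [hstart i]
  have hne : ∀ i, f i t1 ≠ x₀ := by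
    intro i hcon
    have : γ i t1 = γ i t0 := by
      rw [hreal i t1, hreal i t0, hf0 i, hcon]
    exact absurd ((hinj i) this) (by simp [ht0, ht1])
  -- no two arcs go to the same side
  have hgt : ∀ i j, i ≠ j → x₀ < f i t1 → x₀ < f j t1 → False := by
    intro i j hij hi hj
    set m := min (f i t1) (f j t1) with hm
    have hmem : ∀ l : Fin k, x₀ < f l t1 → m ≤ f l t1 → (Complex.ofReal m) ∈ Set.range (γ l) := by
      intro l hl hml
      have : m ∈ Set.Icc (f l t0) (f l t1) := ⟨by rw [hf0]; exact le_min hi.le hj.le, hml⟩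
      obtain ⟨t, ht⟩ := intermediate_value_univ t0 t1 (hfc l) this
      exact ⟨t, by rw [hreal l t, ht]⟩
    have : (Complex.ofReal m) ∈ ({z₀} : Set ℂ) := by
      rw [← hpair i j hij]
      exact ⟨hmem i hi (min_le_left _ _), hmem j hj (min_le_right _ _)⟩
    have hz : z₀ = Complex.ofReal x₀ := by rw [← hstart i, hreal, hf0]
    rw [Set.mem_singleton_iff, hz, Complex.ofReal_inj] at this
    have : x₀ < m := lt_min hi hj
    linarith
  have hlt : ∀ i j, i ≠ j → f i t1 < x₀ → f j t1 < x₀ → False := by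
    intro i j hij hi hj
    set m := max (f i t1) (f j t1) with hm
    have hmem : ∀ l : Fin k, f l t1 < x₀ → f l t1 ≤ m → (Complex.ofReal m) ∈ Set.range (γ l) := by
      intro l hl hml
      have : m ∈ Set.Icc (f l t1) (f l t0) := ⟨hml, by rw [hf0]; exact max_le hi.le hj.le⟩
      obtain ⟨t, ht⟩ := intermediate_value_univ t1 t0 (hfc l) this
      exact ⟨t, by rw [hreal l t, ht]⟩
    have : (Complex.ofReal m) ∈ ({z₀} : Set ℂ) := by
      rw [← hpair i j hij]
      exact ⟨hmem i hi (le_max_left _ _), hmem j hj (le_max_right _ _)⟩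
    have hz : z₀ = Complex.ofReal x₀ := by rw [← hstart i, hreal, hf0]
    rw [Set.mem_singleton_iff, hz, Complex.ofReal_inj] at this
    have : m < x₀ := max_lt hi hj
    linarith
  -- pigeonhole among three indices
  set i0 : Fin k := ⟨0, by omega⟩
  set i1 : Fin k := ⟨1, by omega⟩
  set i2 : Fin k := ⟨2, by omega⟩
  have h01 : i0 ≠ i1 := by simp [i0, i1, Fin.ext_iff]
  have h02 : i0 ≠ i2 := by simp [i0, i2, Fin.ext_iff]
  have h12 : i1 ≠ i2 := by simp [i1, i2, Fin.ext_iff]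
  rcases lt_or_gt_of_ne (hne i0) with a0 | a0 <;>
    rcases lt_or_gt_of_ne (hne i1) with a1 | a1 <;>
      rcases lt_or_gt_of_ne (hne i2) with a2 | a2
  · exact hlt i0 i1 h01 a0 a1
  · exact hlt i0 i1 h01 a0 a1
  · exact hlt i0 i2 h02 a0 a2
  · exact hgt i1 i2 h12 a1 a2
  · exact hlt i1 i2 h12 a1 a2
  · exact hgt i0 i2 h02 a0 a2
  · exact hgt i0 i1 h01 a0 a1
  · exact hgt i0 i1 h01 a0 a1
end
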